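/- Let B be a group and let b ∈ B be such that the cyclic subgroup ⟨b⟩ is not closed in the pro-C topology on B (C an extension-closed pseudovariety of finite groups). Let A be a nontrivial abelian group and fix a ∈ A \ {1}. Let b' be an element of the pro-C closure of ⟨b⟩ with b' ∉ ⟨b⟩. Let g ∈ ⊕_B A be supported only at 1 with g(1)=a, and let h = [g, b']. Then h does not lie in K_b = {[f,b] : f ∈ ⊕_B A}, but h lies in the pro-C closure of K_b in A ≀ B. Consequently K_b is not C-separable in A ≀ B. -/

import Mathlib

open Function SemidirectProduct
open scoped commutatorElement

def restrictedBase (A B : Type*) [Group A] [Group B] : Subgroup (B → A) where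
  carrier := {f | (mulSupport f).Finite}
  one_mem' := by simp
  mul_mem' := fun {f g} hf hg => (hf.union hg).subset (mulSupport_mul f g)
  inv_mem' := fun {f} hf => by simpa using hf

lemma shift_finite (A B : Type*) [Group A] [Group B] (b : B) {f : B → A}
    (hf : (mulSupport f).Finite) : (mulSupport fun x => f (b⁻¹ * x)).Finite := by
  apply (hf.image (fun x => b * x)).subset
  intro x hx
  exact ⟨b⁻¹ * x, hx, by simp⟩

def wreathAut (A B : Type*) [Group A] [Group B] (b : B) : MulAut (restrictedBase A B) where
  toFun f := ⟨fun x => (f : B → A) (b⁻¹ * x), shift_finite A B b f.2⟩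
  invFun f := ⟨fun x => (f : B → A) (b * x), by
    have := shift_finite A B b⁻¹ f.2
    simp only [inv_inv] at this
    exact this⟩
  left_inv f := Subtype.ext (funext fun x => by simp)
  right_inv f := Subtype.ext (funext fun x => by simp)
  map_mul' f g := rfl

def wreathHom (A B : Type*) [Group A] [Group B] : B →* MulAut (restrictedBase A B) where
  toFun := wreathAut A B
  map_one' := by
    ext f x
    simp [wreathAut]
  map_mul' b c := by
    ext f x
    simp [wreathAut, mul_assoc]

abbrev Wreath (A B : Type*) [Group A] [Group B] :=
  restrictedBase A B ⋊[wreathHom A B] B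

structure Pseudovariety (C : (G : Type) → [_inst : Group G] → Prop) : Prop where
  finite : ∀ (G : Type) [Group G], C G → Finite G
  iso_closed : ∀ (G H : Type) [Group G] [Group H], (G ≃* H) → C G → C H
  subgroup_closed : ∀ (G : Type) [Group G], C G → ∀ H : Subgroup G, C H
  prod_closed : ∀ (G H : Type) [Group G] [Group H], C G → C H → C (G × H)
  quot_closed : ∀ (G : Type) [Group G] (N : Subgroup G) [N.Normal], C G → C (G ⧸ N)
  ext_closed : ∀ (G : Type) [Group G] (N : Subgroup G) [N.Normal], C N → C (G ⧸ N) → C G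

def ResiduallyC (C : (G : Type) → [_inst : Group G] → Prop) (G : Type*) [Group G] : Prop :=
  ∀ g : G, g ≠ 1 → ∃ (Q : Type) (_ : Group Q) (φ : G →* Q),
    C Q ∧ Function.Surjective φ ∧ φ g ≠ 1

def CSeparable (C : (G : Type) → [_inst : Group G] → Prop) {G : Type*} [Group G]
    (X : Set G) : Prop :=
  ∀ g : G, g ∉ X → ∃ (Q : Type) (_ : Group Q) (φ : G →* Q),
    C Q ∧ Function.Surjective φ ∧ ∀ x ∈ X, φ g ≠ φ x

def COpen (C : (G : Type) → [_inst : Group G] → Prop) {G : Type} [Group G]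
    (H : Subgroup G) : Prop :=
  ∃ N : Subgroup G, ∃ _ : N.Normal, N ≤ H ∧ C (G ⧸ N)

noncomputable def depthC (C : (G : Type) → [_inst : Group G] → Prop)
    (G : Type) [Group G] (X : Set G) (h : G) : ℕ :=
  sInf {n : ℕ | ∃ N : Subgroup G, ∃ _ : N.Normal, C (G ⧸ N) ∧
    (∀ x ∈ X, (QuotientGroup.mk h : G ⧸ N) ≠ QuotientGroup.mk x) ∧ N.index = n}

def CConjSep (C : (G : Type) → [_inst : Group G] → Prop) (G : Type*) [Group G] : Prop :=
  ∀ g : G, CSeparable C {x : G | ∃ w : G, w * g * w⁻¹ = x}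
section StmtAux

theorem rep_aux {G : Type*} [CommGroup G] (σ : MulAut G) (g : G) (i : ℤ) :
    ∃ f : G, g * ((σ^i) g)⁻¹ = f * (σ f)⁻¹ := by
  have key : ∀ j : ℤ, σ ((σ^j) g) = (σ^(j+1)) g := fun j => by
    rw [add_comm, zpow_add, zpow_one, MulAut.mul_apply]
  induction i using Int.induction_on with
  | zero => exact ⟨1, by simp⟩
  | succ i ih =>
    obtain ⟨f, hf⟩ := ih
    refine ⟨f * (σ^(i:ℤ)) g, ?_⟩
    rw [map_mul, key, mul_inv, mul_mul_mul_comm, ← hf, mul_assoc, inv_mul_cancel_left]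
  | pred i ih =>
    obtain ⟨f, hf⟩ := ih
    refine ⟨f * (((σ^(-(i:ℤ)-1)) g))⁻¹, ?_⟩
    rw [map_mul, map_inv, key, sub_add_cancel, mul_inv, inv_inv, mul_mul_mul_comm, ← hf,
      mul_assoc, mul_comm ((σ ^ (-(i:ℤ) - 1)) g)⁻¹, inv_mul_cancel_left]

variable {A B : Type} [CommGroup A] [Group B]

lemma comm_inl_inr (c : B) (u : restrictedBase A B) :
    (⁅(inl u : Wreath A B), (inr c : Wreath A B)⁆ : Wreath A B)
      = inl (u * (wreathHom A B c u)⁻¹) := by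
  rw [commutatorElement_def, ← map_inv, ← map_inv, mul_assoc, mul_assoc, ← mul_assoc (inr c),
    ← inl_aut, map_inv, ← map_mul]

lemma wreathHom_apply (c : B) (u : restrictedBase A B) (x : B) :
    ((wreathHom A B c u : restrictedBase A B) : B → A) x = (u : B → A) (c⁻¹ * x) := rfl

open Set in
lemma finprod_split (b c : B) (f : restrictedBase A B) :
    ∏ᶠ x ∈ ((Subgroup.zpowers b : Subgroup B) : Set B),
        ((f : B → A) x * ((f : B → A) (c⁻¹ * x))⁻¹)
      = (∏ᶠ x ∈ ((Subgroup.zpowers b : Subgroup B) : Set B), (f : B → A) x)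
        * (∏ᶠ x ∈ ((Subgroup.zpowers b : Subgroup B) : Set B), (f : B → A) (c⁻¹ * x))⁻¹ := by
  set S : Set B := ((Subgroup.zpowers b : Subgroup B) : Set B) with hS
  set F : B → A := (f : B → A) with hF
  have hFfin : (mulSupport F).Finite := f.2
  have hFcfin : (mulSupport fun x => F (c⁻¹ * x)).Finite := shift_finite A B c f.2
  set U : Set B := mulSupport F ∪ mulSupport fun x => F (c⁻¹ * x) with hU
  set s : Set B := S ∩ U with hs_def
  have hs : s.Finite := Set.Finite.inter_of_right (hFfin.union hFcfin) S
  have hsub : mulSupport (fun x => F x * (F (c⁻¹ * x))⁻¹) ⊆ U := by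
    refine (mulSupport_mul F _).trans ?_
    rw [mulSupport_fun_inv]
  have e1 : ∏ᶠ x ∈ S, (F x * (F (c⁻¹ * x))⁻¹) = ∏ᶠ x ∈ s, (F x * (F (c⁻¹ * x))⁻¹) := by
    apply finprod_mem_inter_mulSupport_eq
    rw [hs_def, inter_assoc, Set.inter_eq_self_of_subset_right hsub]
  have e2 : ∏ᶠ x ∈ s, F x = ∏ᶠ x ∈ S, F x := by
    apply finprod_mem_inter_mulSupport_eq
    rw [hs_def, inter_assoc, Set.inter_eq_self_of_subset_right subset_union_left]
  have e3 : ∏ᶠ x ∈ s, F (c⁻¹ * x) = ∏ᶠ x ∈ S, F (c⁻¹ * x) := by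
    apply finprod_mem_inter_mulSupport_eq
    rw [hs_def, inter_assoc, Set.inter_eq_self_of_subset_right subset_union_right]
  rw [e1, finprod_mem_mul_distrib hs, finprod_mem_inv_distrib _ hs, e2, e3]

open Set in
lemma prodA (b : B) (f : restrictedBase A B) :
    ∏ᶠ x ∈ ((Subgroup.zpowers b : Subgroup B) : Set B),
        ((f : B → A) x * ((f : B → A) (b⁻¹ * x))⁻¹) = 1 := by
  rw [finprod_split b b f]
  have himg : (fun x => b⁻¹ * x) '' ((Subgroup.zpowers b : Subgroup B) : Set B)
      = ((Subgroup.zpowers b : Subgroup B) : Set B) := by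
    ext y
    simp only [Set.mem_image, SetLike.mem_coe]
    constructor
    · rintro ⟨x, hx, rfl⟩
      exact mul_mem (inv_mem (Subgroup.mem_zpowers b)) hx
    · intro hy
      exact ⟨b * y, mul_mem (Subgroup.mem_zpowers b) hy, by simp⟩
  have hchg : ∏ᶠ x ∈ ((Subgroup.zpowers b : Subgroup B) : Set B), (f : B → A) (b⁻¹ * x)
      = ∏ᶠ x ∈ ((Subgroup.zpowers b : Subgroup B) : Set B), (f : B → A) x := by
    conv_rhs => rw [← himg]
    rw [finprod_mem_image ((mul_right_injective b⁻¹).injOn)]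
  rw [hchg, mul_inv_cancel]

open Set in
lemma prodB (b b' : B) (hb' : b' ∉ Subgroup.zpowers b) (a : A) (ha : a ≠ 1)
    (g : restrictedBase A B) (hg1 : (g : B → A) 1 = a)
    (hg2 : ∀ x : B, x ≠ 1 → (g : B → A) x = 1) :
    ∏ᶠ x ∈ ((Subgroup.zpowers b : Subgroup B) : Set B),
        ((g : B → A) x * ((g : B → A) (b'⁻¹ * x))⁻¹) = a := by
  rw [finprod_split b b' g]
  have hsupp : mulSupport (g : B → A) = {1} := by
    ext x
    simp only [mem_mulSupport, Set.mem_singleton_iff]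
    constructor
    · intro hx
      by_contra h
      exact hx (hg2 x h)
    · rintro rfl
      rw [hg1]; exact ha
  have h1 : ∏ᶠ x ∈ ((Subgroup.zpowers b : Subgroup B) : Set B), (g : B → A) x = a := by
    rw [← finprod_mem_inter_mulSupport, hsupp,
      Set.inter_eq_self_of_subset_right (by simpa [Set.singleton_subset_iff] using Subgroup.one_mem _),
      finprod_mem_singleton, hg1]
  have h2 : ∏ᶠ x ∈ ((Subgroup.zpowers b : Subgroup B) : Set B),
      (g : B → A) (b'⁻¹ * x) = 1 := by
    rw [← finprod_mem_inter_mulSupport]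
    have hempty : ((Subgroup.zpowers b : Subgroup B) : Set B)
        ∩ mulSupport (fun x => (g : B → A) (b'⁻¹ * x)) = ∅ := by
      ext x
      simp only [Set.mem_inter_iff, mem_mulSupport, Set.mem_empty_iff_false, iff_false,
        not_and, SetLike.mem_coe]
      intro hxS hx
      have hx1 : b'⁻¹ * x = 1 := by
        by_contra h
        exact hx (hg2 _ h)
      have hxb : b' = x := inv_mul_eq_one.mp hx1
      exact hb' (by rwa [hxb])
    rw [hempty, finprod_mem_empty]
  rw [h1, h2, inv_one, mul_one]

end StmtAux

/-- If `⟨b⟩` is not pro-`C` closed in `B`, witnessed by `b'` in the pro-`C`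
closure of `⟨b⟩` with `b' ∉ ⟨b⟩`, `A` abelian, `a ≠ 1`, and `g` is the base-group element
supported at `1` with value `a`, then `h = [g,b']` is not in `K_b = {[f,b] : f ∈ ⊕_B A}`
but lies in its pro-`C` closure; consequently `K_b` is not `C`-separable in `A ≀ B`. -/
theorem stmt15 (C : (G : Type) → [_inst : Group G] → Prop) (hC : Pseudovariety C)
    (A B : Type) [CommGroup A] [Group B] (b b' : B)
    (hb' : b' ∉ Subgroup.zpowers b)
    (hb'cl : ∀ N : Subgroup B, ∀ _ : N.Normal, C (B ⧸ N) →
        ∃ i : ℤ, (QuotientGroup.mk b' : B ⧸ N) = (QuotientGroup.mk b : B ⧸ N) ^ i)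
    (a : A) (ha : a ≠ 1) (g : restrictedBase A B)
    (hg1 : (g : B → A) 1 = a) (hg2 : ∀ x : B, x ≠ 1 → (g : B → A) x = 1) :
    (∀ f : restrictedBase A B,
        (⁅(SemidirectProduct.inl g : Wreath A B), (SemidirectProduct.inr b' : Wreath A B)⁆ : Wreath A B)
          ≠ ⁅(SemidirectProduct.inl f : Wreath A B), (SemidirectProduct.inr b : Wreath A B)⁆) ∧
    (∀ N : Subgroup (Wreath A B), ∀ _ : N.Normal, C (Wreath A B ⧸ N) →
        ∃ f : restrictedBase A B,
          (QuotientGroup.mk ⁅(SemidirectProduct.inl g : Wreath A B), (SemidirectProduct.inr b' : Wreath A B)⁆ : Wreath A B ⧸ N)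
            = QuotientGroup.mk ⁅(SemidirectProduct.inl f : Wreath A B), (SemidirectProduct.inr b : Wreath A B)⁆) ∧
    ¬ CSeparable C {x : Wreath A B | ∃ f : restrictedBase A B,
        x = ⁅(SemidirectProduct.inl f : Wreath A B), (SemidirectProduct.inr b : Wreath A B)⁆} := by
    classical
  -- Part 1
  have part1 : ∀ f : restrictedBase A B,
      (⁅(SemidirectProduct.inl g : Wreath A B), (SemidirectProduct.inr b' : Wreath A B)⁆ : Wreath A B)
        ≠ ⁅(SemidirectProduct.inl f : Wreath A B), (SemidirectProduct.inr b : Wreath A B)⁆ := by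
    intro f heq
    rw [comm_inl_inr, comm_inl_inr] at heq
    have hbase : g * (wreathHom A B b' g)⁻¹ = f * (wreathHom A B b f)⁻¹ :=
      SemidirectProduct.inl_injective heq
    have hfun : ∀ x : B, (g : B → A) x * ((g : B → A) (b'⁻¹ * x))⁻¹
        = (f : B → A) x * ((f : B → A) (b⁻¹ * x))⁻¹ := by
      intro x
      have h := congrArg (fun u : restrictedBase A B => (u : B → A) x) hbase
      simpa [wreathHom_apply] using h
    have hB := prodB b b' hb' a ha g hg1 hg2
    have hA := prodA b f
    rw [finprod_mem_congr rfl (fun x _ => hfun x), hA] at hB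
    exact ha hB.symm
  -- Part 2
  have part2 : ∀ N : Subgroup (Wreath A B), ∀ _ : N.Normal, C (Wreath A B ⧸ N) →
      ∃ f : restrictedBase A B,
        (QuotientGroup.mk ⁅(SemidirectProduct.inl g : Wreath A B), (SemidirectProduct.inr b' : Wreath A B)⁆ : Wreath A B ⧸ N)
          = QuotientGroup.mk ⁅(SemidirectProduct.inl f : Wreath A B), (SemidirectProduct.inr b : Wreath A B)⁆ := by
    intro N hN hCN
    haveI := hN
    set psi : B →* (Wreath A B ⧸ N) :=
      (QuotientGroup.mk' N).comp (SemidirectProduct.inr) with hpsi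
    have hkerC : C (B ⧸ psi.ker) := by
      have e := QuotientGroup.quotientKerEquivRange psi
      exact hC.iso_closed _ _ e.symm (hC.subgroup_closed _ hCN psi.range)
    obtain ⟨i, hi⟩ := hb'cl psi.ker inferInstance hkerC
    have hmk : (QuotientGroup.mk b' : B ⧸ psi.ker) = QuotientGroup.mk (b ^ i) := by
      rw [hi]
      exact ((QuotientGroup.mk' psi.ker).map_zpow b i).symm
    have hmem : b'⁻¹ * b ^ i ∈ psi.ker := (QuotientGroup.eq).mp hmk
    have hpsieq : psi b' = psi (b ^ i) := by
      have h1 : psi (b'⁻¹ * b ^ i) = 1 := hmem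
      rw [map_mul, map_inv] at h1
      exact (inv_mul_eq_one.mp h1)
    have hinr : (QuotientGroup.mk (SemidirectProduct.inr b' : Wreath A B) : Wreath A B ⧸ N)
        = QuotientGroup.mk (SemidirectProduct.inr (b ^ i) : Wreath A B) := hpsieq
    obtain ⟨f, hf⟩ := rep_aux (wreathHom A B b) g i
    refine ⟨f, ?_⟩
    have hcomm : (⁅(SemidirectProduct.inl g : Wreath A B), (SemidirectProduct.inr (b ^ i) : Wreath A B)⁆ : Wreath A B)
        = ⁅(SemidirectProduct.inl f : Wreath A B), (SemidirectProduct.inr b : Wreath A B)⁆ := by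
      rw [comm_inl_inr, comm_inl_inr, map_zpow, hf]
    calc (QuotientGroup.mk ⁅(SemidirectProduct.inl g : Wreath A B), (SemidirectProduct.inr b' : Wreath A B)⁆ : Wreath A B ⧸ N)
        = ⁅(QuotientGroup.mk (SemidirectProduct.inl g : Wreath A B) : Wreath A B ⧸ N),
            QuotientGroup.mk (SemidirectProduct.inr b' : Wreath A B)⁆ :=
          map_commutatorElement (QuotientGroup.mk' N) _ _
      _ = ⁅(QuotientGroup.mk (SemidirectProduct.inl g : Wreath A B) : Wreath A B ⧸ N),
            QuotientGroup.mk (SemidirectProduct.inr (b ^ i) : Wreath A B)⁆ := by rw [hinr]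
      _ = QuotientGroup.mk ⁅(SemidirectProduct.inl g : Wreath A B), (SemidirectProduct.inr (b ^ i) : Wreath A B)⁆ :=
          (map_commutatorElement (QuotientGroup.mk' N) _ _).symm
      _ = QuotientGroup.mk ⁅(SemidirectProduct.inl f : Wreath A B), (SemidirectProduct.inr b : Wreath A B)⁆ := by
          rw [hcomm]
  refine ⟨part1, part2, ?_⟩
  -- Part 3
  intro hsep
  obtain ⟨Q, _, phi, hCQ, hsurj, hne⟩ := hsep
    ⁅(SemidirectProduct.inl g : Wreath A B), (SemidirectProduct.inr b' : Wreath A B)⁆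
    (by rintro ⟨f, hf⟩; exact part1 f hf)
  have hCker : C (Wreath A B ⧸ phi.ker) :=
    hC.iso_closed Q _ (QuotientGroup.quotientKerEquivOfSurjective phi hsurj).symm hCQ
  obtain ⟨f, hf⟩ := part2 phi.ker inferInstance hCker
  refine hne ⁅(SemidirectProduct.inl f : Wreath A B), (SemidirectProduct.inr b : Wreath A B)⁆ ⟨f, rfl⟩ ?_
  have hmem := QuotientGroup.eq.mp hf
  have h1 : phi (⁅(SemidirectProduct.inl g : Wreath A B), (SemidirectProduct.inr b' : Wreath A B)⁆⁻¹
      * ⁅(SemidirectProduct.inl f : Wreath A B), (SemidirectProduct.inr b : Wreath A B)⁆) = 1 := hmem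
  rw [map_mul, map_inv] at h1
  exact (inv_mul_eq_one.mp h1).symm ▸ rfl
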